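/- arXiv:2509.05507 — 2 statements merged into one kernel-verified Lean document; each statement's English description precedes it below -/
import Mathlib

section
/- For all real a > 0 and all natural numbers m, n ≥ 1, the integral over ℝ of 1/((a + i y)^m (a - i y)^n) dy equals π · binom(m + n - 2, m - 1) / (2^{m+n-2} · a^{m+n-1}). -/
/-!
Write `J m n` for the integral. Since `(a + I y) + (a - I y) = 2 a`, partial fractions give
`J (p + 1) (q + 1) = (J p (q + 1) + J (p + 1) q) / (2 a)` as soon as the integrals converge.
On the boundary, `J m 0 = J 0 n = 0` for `m, n ≥ 2`, because `(a + I y)⁻¹ ^ m` has the primitive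
`I (a + I y)⁻¹ ^ (m - 1) / (m - 1)`, which vanishes at `±∞`; and `J 1 1 = ∫ (a² + y²)⁻¹ = π / a`.
The recursion is then Pascal's rule for `(p + q).choose p / (2 a) ^ (p + q)`.
-/

open Complex MeasureTheory Filter Topology

namespace FreqLoop

variable {a : ℝ}

lemma ofReal_add_I_mul_ne_zero (ha : a ≠ 0) (y : ℝ) : (a : ℂ) + I * y ≠ 0 := fun h ↦
  ha (by simpa using congrArg re h)

lemma ofReal_sub_I_mul_ne_zero (ha : a ≠ 0) (y : ℝ) : (a : ℂ) - I * y ≠ 0 := fun h ↦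
  ha (by simpa using congrArg re h)

lemma norm_ofReal_add_I_mul (a y : ℝ) : ‖(a : ℂ) + I * y‖ = √(a ^ 2 + y ^ 2) := by
  rw [mul_comm, norm_add_mul_I]

lemma norm_ofReal_sub_I_mul (a y : ℝ) : ‖(a : ℂ) - I * y‖ = √(a ^ 2 + y ^ 2) := by
  rw [← norm_conj, map_sub, conj_ofReal, map_mul, conj_I, conj_ofReal, sub_eq_add_neg, ← neg_mul,
    neg_neg, norm_ofReal_add_I_mul]

lemma inv_sq_add_sq_eq (ha : a ≠ 0) (y : ℝ) :
    (a ^ 2 + y ^ 2)⁻¹ = (a ^ 2)⁻¹ * (1 + (y / a) ^ 2)⁻¹ := by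
  field_simp

lemma integrable_inv_sq_add_sq (ha : a ≠ 0) : Integrable fun y : ℝ ↦ (a ^ 2 + y ^ 2)⁻¹ := by
  simpa only [inv_sq_add_sq_eq ha] using
    (integrable_inv_one_add_sq.comp_div ha).const_mul (a ^ 2)⁻¹

lemma integral_inv_sq_add_sq (ha : a ≠ 0) : ∫ y : ℝ, (a ^ 2 + y ^ 2)⁻¹ = Real.pi / |a| := by
  simp only [inv_sq_add_sq_eq ha]
  rw [integral_const_mul, Measure.integral_comp_div (fun y ↦ (1 + y ^ 2)⁻¹),
    integral_univ_inv_one_add_sq, smul_eq_mul, ← sq_abs a]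
  have : |a| ≠ 0 := abs_ne_zero.mpr ha
  field_simp

lemma inv_sqrt_pow_le (ha : a ≠ 0) (y : ℝ) (k : ℕ) :
    (√(a ^ 2 + y ^ 2) ^ (k + 2))⁻¹ ≤ (|a| ^ k)⁻¹ * (a ^ 2 + y ^ 2)⁻¹ := by
  have hr : |a| ≤ √(a ^ 2 + y ^ 2) := by
    rw [← Real.sqrt_sq_eq_abs]
    exact Real.sqrt_le_sqrt (le_add_of_nonneg_right (sq_nonneg y))
  rw [← mul_inv, pow_add, Real.sq_sqrt (by positivity)]
  gcongr

lemma integrable_loopIntegrand (ha : a ≠ 0) {m n : ℕ} (hmn : 2 ≤ m + n) :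
    Integrable fun y : ℝ ↦ (((a : ℂ) + I * y) ^ m * ((a : ℂ) - I * y) ^ n)⁻¹ := by
  obtain ⟨k, hk⟩ := Nat.exists_eq_add_of_le' hmn
  refine ((integrable_inv_sq_add_sq ha).const_mul (|a| ^ k)⁻¹).mono' ?_ (.of_forall fun y ↦ ?_)
  · refine (Continuous.inv₀ (by fun_prop) fun y ↦ ?_).aestronglyMeasurable
    exact mul_ne_zero (pow_ne_zero _ (ofReal_add_I_mul_ne_zero ha y))
      (pow_ne_zero _ (ofReal_sub_I_mul_ne_zero ha y))
  · rw [norm_inv, norm_mul, norm_pow, norm_pow, norm_ofReal_add_I_mul, norm_ofReal_sub_I_mul,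
      ← pow_add, hk]
    exact inv_sqrt_pow_le ha y k

lemma tendsto_ofReal_add_I_mul_cobounded (a : ℝ) :
    Tendsto (fun y : ℝ ↦ (a : ℂ) + I * y) (atBot ⊔ atTop) (Bornology.cobounded ℂ) :=
  (tendsto_const_add_cobounded _).comp <| (tendsto_mul_left_cobounded I_ne_zero).comp <|
    (RCLike.tendsto_ofReal_atBot_cobounded ℂ).sup (RCLike.tendsto_ofReal_atTop_cobounded ℂ)

lemma integral_inv_ofReal_add_I_mul_pow (ha : a ≠ 0) {m : ℕ} (hm : 2 ≤ m) :
    ∫ y : ℝ, (((a : ℂ) + I * y) ^ m)⁻¹ = 0 := by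
  obtain ⟨k, rfl⟩ := Nat.exists_eq_add_of_le' hm
  -- `F (a + I y)` is a primitive of the integrand vanishing at both ends of `ℝ`.
  set F : ℂ → ℂ := fun z ↦ I / (k + 1) * (z ^ (k + 1))⁻¹
  have hF : ∀ y : ℝ, HasDerivAt (F ∘ fun y : ℝ ↦ (a : ℂ) + I * y)
      ((((a : ℂ) + I * y) ^ (k + 2))⁻¹) y := by
    intro y
    have hu : HasDerivAt (fun y : ℝ ↦ (a : ℂ) + I * y) I y := by
      simpa using ((hasDerivAt_id y).ofReal_comp.const_mul I).const_add (a : ℂ)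
    have hz := ofReal_add_I_mul_ne_zero ha y
    refine ((((hasDerivAt_pow (k + 1) ((a : ℂ) + I * y)).inv (pow_ne_zero _ hz)).const_mul
      (I / (k + 1))).comp y hu).congr_deriv ?_
    generalize (a : ℂ) + I * y = z at hz ⊢
    rw [Nat.add_sub_cancel, Nat.cast_add_one]
    field_simp
    linear_combination (-z ^ k * z ^ (k + 2)) * I_sq
  have hF0 : Tendsto F (Bornology.cobounded ℂ) (𝓝 0) := by
    simpa [F, ← inv_pow] using (tendsto_inv₀_cobounded.pow (k + 1)).const_mul (I / (k + 1))
  have hlim := hF0.comp (tendsto_ofReal_add_I_mul_cobounded a)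
  have hint : Integrable fun y : ℝ ↦ (((a : ℂ) + I * y) ^ (k + 2))⁻¹ := by
    simpa using integrable_loopIntegrand (n := 0) ha (by omega)
  rw [integral_of_hasDerivAt_of_tendsto hF hint (hlim.mono_left le_sup_left)
    (hlim.mono_left le_sup_right), sub_zero]

lemma integral_inv_ofReal_sub_I_mul_pow (ha : a ≠ 0) {n : ℕ} (hn : 2 ≤ n) :
    ∫ y : ℝ, (((a : ℂ) - I * y) ^ n)⁻¹ = 0 := by
  rw [← integral_inv_ofReal_add_I_mul_pow ha hn, ← integral_neg_eq_self]
  simp only [ofReal_neg, mul_neg, sub_eq_add_neg, neg_neg]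

noncomputable def loopIntegral (a : ℝ) (m n : ℕ) : ℂ :=
  ∫ y : ℝ, (((a : ℂ) + I * y) ^ m * ((a : ℂ) - I * y) ^ n)⁻¹

lemma loopIntegral_zero_left (ha : a ≠ 0) {n : ℕ} (hn : 2 ≤ n) : loopIntegral a 0 n = 0 := by
  simpa [loopIntegral] using integral_inv_ofReal_sub_I_mul_pow ha hn

lemma loopIntegral_zero_right (ha : a ≠ 0) {m : ℕ} (hm : 2 ≤ m) : loopIntegral a m 0 = 0 := by
  simpa [loopIntegral] using integral_inv_ofReal_add_I_mul_pow ha hm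

lemma loopIntegral_one_one (ha : a ≠ 0) : loopIntegral a 1 1 = Real.pi / |a| := by
  have h (y : ℝ) : (((a : ℂ) + I * y) ^ 1 * ((a : ℂ) - I * y) ^ 1)⁻¹ = ((a ^ 2 + y ^ 2)⁻¹ : ℝ) := by
    push_cast
    congr 1
    linear_combination (-(y : ℂ) ^ 2) * I_sq
  simp only [loopIntegral, h]
  rw [integral_complex_ofReal, integral_inv_sq_add_sq ha, ofReal_div]

-- Partial fractions, from `(a + I y) + (a - I y) = 2 a`.
lemma loopIntegral_succ_succ (ha : a ≠ 0) {p q : ℕ} (hpq : 1 ≤ p + q) :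
    loopIntegral a (p + 1) (q + 1)
      = (2 * a : ℂ)⁻¹ * (loopIntegral a p (q + 1) + loopIntegral a (p + 1) q) := by
  rw [loopIntegral, loopIntegral, loopIntegral, ← integral_add
    (integrable_loopIntegrand ha (by omega)) (integrable_loopIntegrand ha (by omega)),
    ← integral_const_mul]
  congr 1 with y
  have hu := ofReal_add_I_mul_ne_zero ha y
  have hv := ofReal_sub_I_mul_ne_zero ha y
  have ha' : (a : ℂ) ≠ 0 := ofReal_ne_zero.mpr ha
  field_simp
  ring

theorem loopIntegral_succ_succ_eq (ha : 0 < a) (p q : ℕ) :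
    loopIntegral a (p + 1) (q + 1) = Real.pi / a * (p + q).choose p / (2 * a) ^ (p + q) := by
  have ha0 := ha.ne'
  have ha' : (a : ℂ) ≠ 0 := ofReal_ne_zero.mpr ha0
  induction p generalizing q with
  | zero =>
    induction q with
    | zero => simp [loopIntegral_one_one ha0, abs_of_pos ha]
    | succ q ih =>
      rw [loopIntegral_succ_succ ha0 (by omega), loopIntegral_zero_left ha0 (by omega), zero_add,
        ih]
      simp only [zero_add, Nat.choose_zero_right, pow_succ]
      field_simp
  | succ p ihp =>
    induction q with
    | zero =>
      rw [loopIntegral_succ_succ ha0 (by omega), loopIntegral_zero_right ha0 (by omega), add_zero,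
        ihp]
      simp only [add_zero, Nat.choose_self, pow_succ]
      field_simp
    | succ q ihq =>
      rw [loopIntegral_succ_succ ha0 (by omega), ihp, ihq,
        show p + 1 + (q + 1) = p + q + 1 + 1 by ring, Nat.choose_succ_succ',
        show p + (q + 1) = p + q + 1 by ring, show p + 1 + q = p + q + 1 by ring]
      push_cast
      field_simp
      ring

end FreqLoop

theorem freq_loop_integral_general (a : ℝ) (ha : 0 < a) (m n : ℕ) (hm : 1 ≤ m) (hn : 1 ≤ n) :
    ∫ y : ℝ, (1 : ℂ) / (((a : ℂ) + Complex.I * (y : ℂ)) ^ m * ((a : ℂ) - Complex.I * (y : ℂ)) ^ n)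
      = (Real.pi * (Nat.choose (m + n - 2) (m - 1) : ℝ) / (2 ^ (m + n - 2) * a ^ (m + n - 1)) : ℝ) := by
  obtain ⟨p, rfl⟩ := Nat.exists_eq_add_of_le' hm
  obtain ⟨q, rfl⟩ := Nat.exists_eq_add_of_le' hn
  have h := FreqLoop.loopIntegral_succ_succ_eq ha p q
  simp only [FreqLoop.loopIntegral, ← one_div] at h
  rw [h, show p + 1 + (q + 1) - 2 = p + q by omega, show p + 1 + (q + 1) - 1 = p + q + 1 by omega,
    Nat.add_sub_cancel]
  push_cast
  ring
end

section
/- Let m² > -1 and λ ∈ ℝ, and define f : ℝ⁴ × ℝ → ℂ by f(x, y) = i y + max(‖x‖², 1) + m². Then (32 λ³/π) · ∫_{ℝ⁴} ∫_ℝ 1/(f(x,y)³ · f(x,-y)) dy dx = 4 π² λ³ (m² (m² + 3) + 3) / (1 + m²)³. -/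
/-!
For fixed `x`, write `a = max(‖x‖², 1) + m² > 0`; the `y`-integrand is then
`1 / ((a + i y)³ (a - i y))`. Rescaling `y = a t` reduces it to `a = 1`, where partial fractions give
`1 / ((1 + i t)³ (1 - i t)) = 1 / (4 (1 + t²)) + 1 / (4 (1 + i t)²) + 1 / (2 (1 + i t)³)`.
The last two terms have the primitives `i / (n - 1) · (1 + i t)^(1 - n)`, which vanish at `±∞`, so the
`y`-integral is `π / (4 a³)`. The remaining integral over `ℝ⁴` is radial; in polar coordinates it is
`2 π² ∫₀^∞ r³ π / (4 (max(r², 1) + m²)³) dr`, which splits at `r = 1` into two elementary integrals.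
-/

open MeasureTheory Complex Real Set Filter Topology Bornology

lemma norm_one_add_I_mul_sq (y : ℝ) : ‖1 + I * y‖ ^ 2 = 1 + y ^ 2 := by
  rw [← normSq_eq_norm_sq, mul_comm, ← ofReal_one, normSq_add_mul_I, one_pow]

lemma abs_le_norm_one_add_I_mul (y : ℝ) : |y| ≤ ‖1 + I * y‖ := by
  simpa using abs_im_le_norm (1 + I * y)

lemma one_le_norm_one_add_I_mul (y : ℝ) : 1 ≤ ‖1 + I * y‖ := by
  simpa using abs_re_le_norm (1 + I * y)

lemma one_add_I_mul_ne_zero (y : ℝ) : 1 + I * y ≠ 0 :=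
  norm_pos_iff.mp (one_pos.trans_le (one_le_norm_one_add_I_mul y))

lemma tendsto_one_add_I_mul_cobounded :
    Tendsto (fun y : ℝ => 1 + I * y) (cobounded ℝ) (cobounded ℂ) := by
  rw [← tendsto_norm_atTop_iff_cobounded]
  refine tendsto_atTop_mono (fun y => ?_) tendsto_norm_cobounded_atTop
  simpa only [Real.norm_eq_abs] using abs_le_norm_one_add_I_mul y

lemma integrable_inv_one_add_I_mul_pow {n : ℕ} (hn : 2 ≤ n) :
    Integrable fun y : ℝ => ((1 + I * y) ^ n)⁻¹ := by
  refine integrable_inv_one_add_sq.mono'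
    (by fun_prop (disch := exact fun y => pow_ne_zero _ (one_add_I_mul_ne_zero y))) ?_
  filter_upwards with y
  rw [norm_inv, norm_pow, ← norm_one_add_I_mul_sq]
  exact inv_anti₀ (pow_pos (one_pos.trans_le (one_le_norm_one_add_I_mul y)) 2)
    (pow_le_pow_right₀ (one_le_norm_one_add_I_mul y) hn)

lemma hasDerivAt_inv_one_add_I_mul_pow (k : ℕ) (y : ℝ) :
    HasDerivAt (fun y : ℝ => I / (k + 1) * ((1 + I * y) ^ (k + 1))⁻¹)
      ((1 + I * y) ^ (k + 2))⁻¹ y := by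
  have hz : HasDerivAt (fun y : ℝ => 1 + I * y) I y := by
    simpa using ((hasDerivAt_id y).ofReal_comp.const_mul I).const_add 1
  have hk : (k : ℂ) + 1 ≠ 0 := by exact_mod_cast k.succ_ne_zero
  have h := one_add_I_mul_ne_zero y
  refine (((hz.pow (k + 1)).inv (pow_ne_zero _ h)).const_mul (I / (k + 1))).congr_deriv ?_
  simp only [Nat.add_sub_cancel, Nat.cast_add, Nat.cast_one, Pi.pow_apply]
  field_simp
  rw [I_sq]
  ring

lemma integral_inv_one_add_I_mul_pow {n : ℕ} (hn : 2 ≤ n) :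
    ∫ y : ℝ, ((1 + I * y) ^ n)⁻¹ = 0 := by
  obtain ⟨k, rfl⟩ := Nat.exists_eq_add_of_le' hn
  have hlim : Tendsto (fun y : ℝ => I / (k + 1) * ((1 + I * y) ^ (k + 1))⁻¹) (cobounded ℝ)
      (𝓝 0) := by
    simpa using ((tendsto_inv₀_cobounded.comp ((tendsto_pow_cobounded_cobounded
      k.succ_ne_zero).comp tendsto_one_add_I_mul_cobounded)).const_mul (I / (k + 1)))
  simpa using integral_of_hasDerivAt_of_tendsto (hasDerivAt_inv_one_add_I_mul_pow k)
    (integrable_inv_one_add_I_mul_pow hn) (hlim.mono_left IsOrderBornology.atBot_le_cobounded)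
    (hlim.mono_left IsOrderBornology.atTop_le_cobounded)

lemma one_div_one_add_I_mul_pow_three_mul_eq (y : ℝ) :
    1 / ((1 + I * y) ^ 3 * (1 - I * y)) =
      (((1 + y ^ 2)⁻¹ : ℝ) : ℂ) / 4 + ((1 + I * y) ^ 2)⁻¹ / 4 + ((1 + I * y) ^ 3)⁻¹ / 2 := by
  have hz := one_add_I_mul_ne_zero y
  have hw : 1 - I * y ≠ 0 := by simpa [sub_eq_add_neg] using one_add_I_mul_ne_zero (-y)
  have hzw : (1 + I * y) * (1 - I * y) = ((1 + y ^ 2 : ℝ) : ℂ) := by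
    push_cast
    linear_combination (-(y : ℂ) ^ 2) * I_sq
  rw [ofReal_inv, ← hzw]
  field_simp
  ring

lemma integral_one_div_one_add_I_mul_pow_three_mul :
    ∫ y : ℝ, 1 / ((1 + I * y) ^ 3 * (1 - I * y)) = (π : ℂ) / 4 := by
  have h1 : Integrable fun y : ℝ => (((1 + y ^ 2)⁻¹ : ℝ) : ℂ) / 4 :=
    integrable_inv_one_add_sq.ofReal.div_const 4
  have h2 := (integrable_inv_one_add_I_mul_pow le_rfl).div_const (4 : ℂ)
  have h3 := (integrable_inv_one_add_I_mul_pow (n := 3) (by norm_num)).div_const (2 : ℂ)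
  simp_rw [one_div_one_add_I_mul_pow_three_mul_eq]
  rw [integral_add (by exact h1.add h2) h3, integral_add h1 h2, integral_div, integral_div,
    integral_div, integral_complex_ofReal, integral_univ_inv_one_add_sq,
    integral_inv_one_add_I_mul_pow le_rfl, integral_inv_one_add_I_mul_pow (by norm_num)]
  ring

lemma integral_one_div_ofReal_add_I_mul_pow_three_mul {a : ℝ} (ha : 0 < a) :
    ∫ y : ℝ, 1 / ((a + I * y) ^ 3 * (a - I * y)) = (π : ℂ) / (4 * a ^ 3) := by
  have haC : (a : ℂ) ≠ 0 := by exact_mod_cast ha.ne'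
  have hscale : ∀ y : ℝ, 1 / ((a + I * y) ^ 3 * (a - I * y)) =
      ((a ^ 4)⁻¹ : ℂ) * (1 / ((1 + I * ↑(y / a)) ^ 3 * (1 - I * ↑(y / a)))) := fun y => by
    push_cast
    field_simp
  simp_rw [hscale]
  rw [integral_const_mul,
    Measure.integral_comp_div (fun t : ℝ => 1 / ((1 + I * t) ^ 3 * (1 - I * t))),
    integral_one_div_one_add_I_mul_pow_three_mul, abs_of_pos ha, real_smul]
  field_simp

lemma integral_fun_norm_euclideanSpace_fin_four {F : Type*} [NormedAddCommGroup F]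
    [NormedSpace ℝ F] (φ : ℝ → F) :
    ∫ x : EuclideanSpace ℝ (Fin 4), φ ‖x‖ = (2 * π ^ 2) • ∫ r in Ioi (0 : ℝ), r ^ 3 • φ r := by
  have hvol : volume.real (Metric.ball (0 : EuclideanSpace ℝ (Fin 4)) 1) = π ^ 2 / 2 := by
    rw [measureReal_def, InnerProductSpace.volume_ball_of_dim_even (k := 2) (by simp),
      ENNReal.ofReal_one, one_pow, one_mul, ENNReal.toReal_ofReal (by positivity)]
    norm_num [Nat.factorial]
  rw [integral_fun_norm_addHaar, finrank_euclideanSpace_fin, hvol, ← Nat.cast_smul_eq_nsmul ℝ,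
    smul_smul]
  congr 1
  push_cast
  ring

noncomputable def radialPrimitive (m r : ℝ) : ℝ := m / 4 * ((r ^ 2 + m) ^ 2)⁻¹ - 1 / 2 * (r ^ 2 + m)⁻¹

lemma hasDerivAt_radialPrimitive {m r : ℝ} (hr : 0 < r ^ 2 + m) :
    HasDerivAt (radialPrimitive m) (r ^ 3 / (r ^ 2 + m) ^ 3) r := by
  have hq : HasDerivAt (fun r : ℝ => r ^ 2 + m) (2 * r) r := by
    simpa using (hasDerivAt_pow 2 r).add_const m
  refine ((((hq.pow 2).inv (pow_ne_zero 2 hr.ne')).const_mul (m / 4)).sub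
    ((hq.inv hr.ne').const_mul (1 / 2))).congr_deriv ?_
  simp only [Pi.pow_apply]
  field_simp
  ring

lemma tendsto_radialPrimitive_atTop (m : ℝ) : Tendsto (radialPrimitive m) atTop (𝓝 0) := by
  have hinv : Tendsto (fun r : ℝ => (r ^ 2 + m)⁻¹) atTop (𝓝 0) :=
    (tendsto_atTop_add_const_right _ m (tendsto_pow_atTop two_ne_zero)).inv_tendsto_atTop
  convert ((hinv.pow 2).const_mul (m / 4)).sub (hinv.const_mul (1 / 2)) using 2 <;>
    simp [radialPrimitive, inv_pow]

lemma sq_add_pos_of_one_le {m r : ℝ} (hm : -1 < m) (hr : 1 ≤ r) : 0 < r ^ 2 + m := by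
  nlinarith

lemma integrableOn_Ioi_one_pow_three_div_sq_add_pow_three {m : ℝ} (hm : -1 < m) :
    IntegrableOn (fun r : ℝ => r ^ 3 / (r ^ 2 + m) ^ 3) (Ioi 1) := by
  refine integrableOn_Ioi_deriv_of_nonneg'
    (fun r hr => hasDerivAt_radialPrimitive (sq_add_pos_of_one_le hm hr))
    (fun r (hr : 1 < r) => ?_) (tendsto_radialPrimitive_atTop m)
  have := sq_add_pos_of_one_le hm hr.le
  have := zero_lt_one.trans hr
  positivity

lemma integral_Ioi_one_pow_three_div_sq_add_pow_three {m : ℝ} (hm : -1 < m) :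
    ∫ r in Ioi (1 : ℝ), r ^ 3 / (r ^ 2 + m) ^ 3 = (m + 2) / (4 * (1 + m) ^ 2) := by
  rw [integral_Ioi_of_hasDerivAt_of_tendsto'
    (fun r hr => hasDerivAt_radialPrimitive (sq_add_pos_of_one_le hm hr))
    (integrableOn_Ioi_one_pow_three_div_sq_add_pow_three hm) (tendsto_radialPrimitive_atTop m)]
  have : 0 < 1 + m := by linarith
  simp only [radialPrimitive]
  field_simp
  ring

lemma integral_Ioi_zero_pow_three_div_max_sq_one_add_pow_three {m : ℝ} (hm : -1 < m) :
    ∫ r in Ioi (0 : ℝ), r ^ 3 / (max (r ^ 2) 1 + m) ^ 3 =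
      (m * (m + 3) + 3) / (4 * (1 + m) ^ 3) := by
  have hpos : ∀ r : ℝ, 0 < max (r ^ 2) 1 + m := fun r => by
    linarith [le_max_right (r ^ 2) 1]
  have hcont : Continuous fun r : ℝ => r ^ 3 / (max (r ^ 2) 1 + m) ^ 3 := by
    fun_prop (disch := exact fun r => pow_ne_zero 3 (hpos r).ne')
  have hIoc : EqOn (fun r : ℝ => r ^ 3 / (max (r ^ 2) 1 + m) ^ 3)
      (fun r => r ^ 3 / (1 + m) ^ 3) (Ioc 0 1) := fun r hr => by
    simp only [max_eq_right (pow_le_one₀ hr.1.le hr.2)]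
  have hIoi : EqOn (fun r : ℝ => r ^ 3 / (max (r ^ 2) 1 + m) ^ 3)
      (fun r => r ^ 3 / (r ^ 2 + m) ^ 3) (Ioi 1) := fun r (hr : 1 < r) => by
    simp only [max_eq_left (one_le_pow₀ hr.le)]
  rw [← Ioc_union_Ioi_eq_Ioi zero_le_one, setIntegral_union (Ioc_disjoint_Ioi le_rfl)
    measurableSet_Ioi hcont.integrableOn_Ioc
    ((integrableOn_Ioi_one_pow_three_div_sq_add_pow_three hm).congr_fun hIoi.symm
      measurableSet_Ioi),
    setIntegral_congr_fun measurableSet_Ioc hIoc, setIntegral_congr_fun measurableSet_Ioi hIoi,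
    integral_Ioi_one_pow_three_div_sq_add_pow_three hm, integral_div,
    ← intervalIntegral.integral_of_le zero_le_one, integral_pow]
  have : 0 < 1 + m := by linarith
  field_simp
  ring

theorem sextic_melonic_coupling (msq lam : ℝ) (h : -1 < msq)
    (f : (EuclideanSpace ℝ (Fin 4)) × ℝ → ℂ)
    (hf : ∀ x y, f (x, y) = Complex.I * (y : ℂ) + ((max (‖x‖ ^ 2) 1 + msq : ℝ) : ℂ)) :
    (32 * (lam : ℂ) ^ 3 / (Real.pi : ℂ)) *
        ∫ x : EuclideanSpace ℝ (Fin 4), ∫ y : ℝ, 1 / (f (x, y) ^ 3 * f (x, -y))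
      = 4 * (Real.pi : ℂ) ^ 2 * (lam : ℂ) ^ 3 *
          ((msq : ℂ) * ((msq : ℂ) + 3) + 3) / (1 + (msq : ℂ)) ^ 3 := by
  have hinner : ∀ x : EuclideanSpace ℝ (Fin 4), ∫ y : ℝ, 1 / (f (x, y) ^ 3 * f (x, -y)) =
      ((π / (4 * (max (‖x‖ ^ 2) 1 + msq) ^ 3) : ℝ) : ℂ) := fun x => by
    have hy := integral_one_div_ofReal_add_I_mul_pow_three_mul
      (by linarith [le_max_right (‖x‖ ^ 2) 1] : 0 < max (‖x‖ ^ 2) 1 + msq)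
    push_cast at hy ⊢
    rw [← hy]
    congr 1 with y
    rw [hf, hf]
    push_cast
    ring
  have hradial : ∫ r in Ioi (0 : ℝ), r ^ 3 • (π / (4 * (max (r ^ 2) 1 + msq) ^ 3)) =
      π / 4 * ((msq * (msq + 3) + 3) / (4 * (1 + msq) ^ 3)) := by
    rw [← integral_Ioi_zero_pow_three_div_max_sq_one_add_pow_three h, ← integral_const_mul]
    congr 1 with r
    rw [smul_eq_mul]
    field_simp
  simp_rw [hinner]
  rw [integral_complex_ofReal,
    integral_fun_norm_euclideanSpace_fin_four (fun r => π / (4 * (max (r ^ 2) 1 + msq) ^ 3)),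
    hradial, smul_eq_mul]
  have hpi : (π : ℂ) ≠ 0 := by exact_mod_cast pi_ne_zero
  have hm : 1 + (msq : ℂ) ≠ 0 := by exact_mod_cast (by linarith : (0 : ℝ) < 1 + msq).ne'
  push_cast
  field_simp
  ring
end
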